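/- arXiv:2307.15416 — 3 statements merged into one kernel-verified Lean document; each statement's English description precedes it below -/
import Mathlib

section
/- Let G and G' be abelian groups with G' torsion, and let β : G' → Hom(G, ℚ/ℤ) be an injective homomorphism. Endow G with the weakest topology making β(f) : G → ℚ/ℤ continuous for every f ∈ G' (where ℚ/ℤ is discrete). Then every continuous homomorphism G → ℚ/ℤ lies in the image of β; that is, β : G' → G^⋆ is a bijection onto the group of continuous homomorphisms G → ℚ/ℤ. -/
/-- The group `ℚ/ℤ`, endowed with the discrete topology. -/
def QZ : Type := AddCircle (1 : ℚ)

instance : AddCommGroup QZ := inferInstanceAs (AddCommGroup (AddCircle (1 : ℚ)))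
instance : TopologicalSpace QZ := ⊥
instance : DiscreteTopology QZ := ⟨rfl⟩
instance : IsTopologicalAddGroup QZ where
  continuous_add := continuous_of_discreteTopology
  continuous_neg := continuous_of_discreteTopology

/-!
A continuous character `χ` kills some basic neighbourhood of `0`, i.e. the common kernel of
finitely many `β f₁, …, β f_r`. So `χ` factors through `Φ = (β f₁, …, β f_r) : G → (ℚ/ℤ)^r`,
and since `ℚ/ℤ` is an injective `ℤ`-module the factorisation extends to a character `ψ` of
`(ℚ/ℤ)^r`. On each coordinate `ψ` is an endomorphism of `ℚ/ℤ`, which on the cyclic group of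
`n`-torsion points is multiplication by an integer `m_i`; as `β f_i` has finite order, this gives
`χ = ∑ m_i • β f_i = β (∑ m_i • f_i)`.
-/

open Topology AddSubgroup

theorem exists_finset_forall_eq_zero_of_continuous_iInf_induced {ι G A B : Type*}
    [AddZeroClass G] [AddZeroClass A] [AddZeroClass B]
    [TopologicalSpace A] [DiscreteTopology A] [TopologicalSpace B] [DiscreteTopology B]
    (φ : ι → G →+ A) (χ : G →+ B)
    (hχ : Continuous[⨅ i, TopologicalSpace.induced (φ i) inferInstance, inferInstance] χ) :
    ∃ s : Finset ι, ∀ x, (∀ i ∈ s, φ i x = 0) → χ x = 0 := by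
  let _ : TopologicalSpace G := ⨅ i, TopologicalSpace.induced (φ i) inferInstance
  have h : χ ⁻¹' {0} ∈ 𝓝 (0 : G) :=
    (isOpen_discrete _).preimage hχ |>.mem_nhds (by simp)
  simp only [nhds_iInf, nhds_induced, map_zero, nhds_discrete, Filter.comap_pure] at h
  obtain ⟨s, hs⟩ := (Filter.mem_iInf_finite _).1 h
  rw [Filter.iInf_principal_finset, Filter.mem_principal] at hs
  exact ⟨s, fun x hx => hs (Set.mem_iInter₂.2 hx)⟩

theorem AddMonoidHom.exists_comp_eq_of_ker_le {G H Q : Type*} [AddCommGroup G] [AddCommGroup H]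
    [AddCommGroup Q] (hQ : Module.Baer ℤ Q) (Φ : G →+ H) (χ : G →+ Q) (h : Φ.ker ≤ χ.ker) :
    ∃ ψ : H →+ Q, ψ.comp Φ = χ := by
  obtain ⟨ψ, hψ⟩ := hQ.extension_property_addMonoidHom _ (QuotientAddGroup.kerLift_injective Φ)
    (QuotientAddGroup.lift Φ.ker χ h)
  exact ⟨ψ, AddMonoidHom.ext fun x => DFunLike.congr_fun hψ (x : G ⧸ Φ.ker)⟩

theorem AddMonoidHom.exists_zsmul_eq_of_nsmul_eq_zero_imp_mem_zmultiples {A : Type*}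
    [AddCommGroup A] (c : A →+ A) {n : ℕ} {g : A} (hg : n • g = 0)
    (hcyc : ∀ t : A, n • t = 0 → t ∈ zmultiples g) :
    ∃ m : ℤ, ∀ t : A, n • t = 0 → c t = m • t := by
  obtain ⟨m, hm⟩ := hcyc (c g) (by rw [← map_nsmul, hg, map_zero])
  refine ⟨m, fun t ht => ?_⟩
  obtain ⟨k, rfl⟩ := hcyc t ht
  rw [map_zsmul, ← hm, smul_comm]

namespace AddCircle

variable {𝕜 : Type*} [Field 𝕜] [LinearOrder 𝕜] [IsStrictOrderedRing 𝕜] {p : 𝕜}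

theorem nsmul_div_natCast_eq_zero {n : ℕ} (hn : n ≠ 0) : n • ((p / n : 𝕜) : AddCircle p) = 0 := by
  rw [← coe_nsmul, nsmul_eq_mul, mul_div_cancel₀ _ (Nat.cast_ne_zero.2 hn), coe_period]

theorem mem_zmultiples_of_nsmul_eq_zero {n : ℕ} (hn : n ≠ 0) {t : AddCircle p} (ht : n • t = 0) :
    t ∈ zmultiples ((p / n : 𝕜) : AddCircle p) := by
  obtain ⟨q, rfl⟩ := QuotientAddGroup.mk_surjective t
  obtain ⟨k, hk⟩ := (coe_eq_zero_iff p).1 (by rw [coe_nsmul]; exact ht)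
  refine ⟨k, ?_⟩
  change k • _ = _
  rw [← coe_zsmul]
  congr 1
  rw [nsmul_eq_mul] at hk
  rw [zsmul_eq_mul, mul_div_assoc', div_eq_iff (Nat.cast_ne_zero.2 hn), ← zsmul_eq_mul, hk,
    mul_comm]

theorem exists_zsmul_eq_of_nsmul_eq_zero (c : AddCircle p →+ AddCircle p) {n : ℕ}
    (hn : n ≠ 0) : ∃ m : ℤ, ∀ t : AddCircle p, n • t = 0 → c t = m • t :=
  c.exists_zsmul_eq_of_nsmul_eq_zero_imp_mem_zmultiples (nsmul_div_natCast_eq_zero hn)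
    fun _ => mem_zmultiples_of_nsmul_eq_zero hn

end AddCircle

noncomputable instance : DivisibleBy QZ ℤ := inferInstanceAs (DivisibleBy (AddCircle (1 : ℚ)) ℤ)

theorem QZ.exists_eq_sum_zsmul_of_forall_nsmul_eq_zero {ι : Type*} [Fintype ι] [DecidableEq ι]
    (ψ : (ι → QZ) →+ QZ) (n : ι → ℕ) (hn : ∀ i, n i ≠ 0) :
    ∃ m : ι → ℤ, ∀ v : ι → QZ, (∀ i, n i • v i = 0) → ψ v = ∑ i, m i • v i := by
  choose m hm using fun i =>
    AddCircle.exists_zsmul_eq_of_nsmul_eq_zero (p := (1 : ℚ))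
      (ψ.comp (AddMonoidHom.single (fun _ => QZ) i)) (hn i)
  refine ⟨m, fun v hv => ?_⟩
  calc ψ v = ∑ i, ψ (Pi.single i (v i)) := by rw [← map_sum, Finset.univ_sum_single]
    _ = ∑ i, m i • v i := Finset.sum_congr rfl fun i _ => hm i _ (hv i)

theorem mem_closure_range_of_continuous_iInf_induced {ι G : Type*} [AddCommGroup G]
    (φ : ι → G →+ QZ) (hφ : ∀ i, IsOfFinAddOrder (φ i)) (χ : G →+ QZ)
    (hχ : Continuous[⨅ i, TopologicalSpace.induced (φ i) inferInstance, inferInstance] χ) :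
    χ ∈ closure (Set.range φ) := by
  classical
  obtain ⟨s, hs⟩ := exists_finset_forall_eq_zero_of_continuous_iInf_induced φ χ hχ
  let Φ : G →+ (s → QZ) := AddMonoidHom.pi fun i => φ i
  obtain ⟨ψ, hψ⟩ := Φ.exists_comp_eq_of_ker_le (Module.Baer.of_divisible QZ)
    χ fun x hx => hs x fun i hi => congr_fun hx ⟨i, hi⟩
  obtain ⟨m, hm⟩ := QZ.exists_eq_sum_zsmul_of_forall_nsmul_eq_zero ψ
    (fun i => addOrderOf (φ i)) fun i => (hφ i).addOrderOf_pos.ne'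
  have hχ_eq : χ = ∑ i : s, m i • φ i := by
    ext x
    rw [← hψ, AddMonoidHom.comp_apply, hm (Φ x) fun i => by
      change _ • φ i x = 0
      rw [← AddMonoidHom.nsmul_apply, addOrderOf_nsmul_eq_zero, AddMonoidHom.zero_apply]]
    simp [Φ]
  rw [hχ_eq]
  exact sum_mem fun i _ => zsmul_mem (subset_closure (Set.mem_range_self _)) _

theorem statement_0_general {G G' : Type*} [AddCommGroup G] [AddCommGroup G']
    (htor : ∀ f : G', ∃ n : ℕ, 0 < n ∧ n • f = 0)
    (β : G' →+ (G →+ QZ))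
    (χ : G →+ QZ)
    (hχ : @Continuous G QZ
      (⨅ f : G', TopologicalSpace.induced (β f) inferInstance) inferInstance χ) :
    ∃ f : G', β f = χ := by
  have hβ_tor : ∀ f, IsOfFinAddOrder (β f) := fun f =>
    β.isOfFinAddOrder (isOfFinAddOrder_iff_nsmul_eq_zero.2 (htor f))
  have hχ_mem := mem_closure_range_of_continuous_iInf_induced (β ·) hβ_tor χ hχ
  exact (closure_le β.range).2 (Set.range_subset_iff.2 fun f => ⟨f, rfl⟩) hχ_mem

/-- Let `G, G'` be abelian groups with `G'` torsion and
`β : G' → Hom(G, ℚ/ℤ)` an injective homomorphism.  Endow `G` with the weakest topology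
making every `β f : G → ℚ/ℤ` continuous (with `ℚ/ℤ` discrete).  Then every continuous
homomorphism `G → ℚ/ℤ` lies in the image of `β`; i.e. `β : G' → G^⋆` is bijective. -/
theorem statement_0 {G G' : Type*} [AddCommGroup G] [AddCommGroup G']
    (htor : ∀ f : G', ∃ n : ℕ, 0 < n ∧ n • f = 0)
    (β : G' →+ (G →+ QZ)) (hβ : Function.Injective β)
    (χ : G →+ QZ)
    (hχ : @Continuous G QZ
      (⨅ f : G', TopologicalSpace.induced (β f) inferInstance) inferInstance χ) :
    ∃ f : G', β f = χ :=
  statement_0_general htor β χ hχ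
end

section
/- Let K be a discrete valuation field of characteristic p > 0 with normalized valuation v_K, and for n ≥ 0 let fil_n W_m(K) = { (a_{m-1}, …, a_0) ∈ W_m(K) : p^i v_K(a_i) ≥ −n for all i }. Let F̄ be the Frobenius on Witt vectors raising each component to the p-th power. Then for a ∈ W_m(K), one has (1 − F̄)(a) ∈ fil_n W_m(K) if and only if a ∈ fil_{⌊n/p⌋} W_m(K). -/
/-
The filtration `fil_n` is an additive subgroup. Indeed, its defining bounds are equivalent to
`v(x_i)^(p^(m-1)) ≤ exp(n)^(p^i)` for all `i`, and the Witt subtraction polynomials have integer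
coefficients and are weighted homogeneous of degree `p^j` when `X_i` has weight `p^i`, so these
bounds pass to the coordinates of a difference. Since `F̄ a ∈ fil_n` exactly when
`a ∈ fil_⌊n/p⌋`, this gives one direction. Conversely, induct on the coordinate `j`: the part of
`a` below `j` already lies in `fil_⌊n/p⌋`, so subtracting its image under `1 - F̄` leaves a vector
in `fil_n` whose first nonzero coordinate is `a_j - a_j^p`, and by the ultrametric inequality
`v(a_j - a_j^p) = v(a_j^p)` as soon as `v(a_j) > 1`.
-/

open Multiplicative

/-- Kato's ramification filtration `fil_n W_m(K)` on truncated Witt vectors: writing a Witt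
vector as `(a_{m-1}, …, a_0)` (so that the coefficient of index `j` is `a_{m-1-j}`), it
consists of those `(a_{m-1}, …, a_0)` with `p^i v_K(a_i) ≥ -n` for all `i`.  In terms of a
multiplicative valuation `v : K → ℤₘ₀` (with `v(π) = ofAdd (-1)` for a uniformizer `π`),
the condition reads `v(x_j)^{p^{m-1-j}} ≤ ofAdd n`. -/
def wittFil (p m : ℕ) [hp : Fact p.Prime] (K : Type*) [CommRing K]
    (v : Valuation K (WithZero (Multiplicative ℤ))) (n : ℕ) :
    Set (TruncatedWittVector p m K) :=
  {x | ∀ j : Fin m,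
    (v (x.coeff j)) ^ (p ^ (m - 1 - (j : ℕ))) ≤
      ((ofAdd (n : ℤ) : Multiplicative ℤ) : WithZero (Multiplicative ℤ))}

open MvPolynomial
open scoped WithZero

theorem MvPolynomial.IsWeightedHomogeneous.aeval {σ τ R : Type*} [CommSemiring R]
    {w : σ → ℕ} {w' : τ → ℕ} {φ : MvPolynomial σ R} {c d : ℕ}
    (hφ : φ.IsWeightedHomogeneous w d) {f : σ → MvPolynomial τ R}
    (hf : ∀ s, (f s).IsWeightedHomogeneous w' (c * w s)) :
    (aeval f φ).IsWeightedHomogeneous w' (c * d) := by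
  rw [φ.as_sum, map_sum]
  refine IsWeightedHomogeneous.sum _ _ _ fun u hu => ?_
  rw [aeval_monomial, algebraMap_eq, ← hφ (mem_support_iff.mp hu), Finsupp.weight_apply,
    Finsupp.sum, Finset.mul_sum, Finsupp.prod]
  refine (IsWeightedHomogeneous.prod _ _ _ fun s _ => ?_).C_mul _
  simpa only [smul_eq_mul, mul_left_comm] using (hf s).pow (u s)

section WittPolynomials

variable (p : ℕ)

theorem isWeightedHomogeneous_wittPolynomial (R : Type*) [CommRing R] (k : ℕ) :
    (wittPolynomial p R k).IsWeightedHomogeneous (p ^ ·) (p ^ k) := by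
  rw [wittPolynomial_eq_sum_C_mul_X_pow]
  refine IsWeightedHomogeneous.sum _ _ _ fun i hi => ?_
  have := ((isWeightedHomogeneous_X R (p ^ ·) i).pow (p ^ (k - i))).C_mul ((p : R) ^ i)
  rwa [smul_eq_mul, ← pow_add,
    Nat.sub_add_cancel (Nat.lt_succ_iff.mp (Finset.mem_range.mp hi))] at this

theorem isWeightedHomogeneous_xInTermsOfW [Invertible (p : ℚ)] (k : ℕ) :
    (xInTermsOfW p ℚ k).IsWeightedHomogeneous (p ^ ·) (p ^ k) := by
  induction k using Nat.strong_induction_on with | _ k ih => ?_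
  rw [xInTermsOfW_eq, mul_comm]
  refine IsWeightedHomogeneous.C_mul ((isWeightedHomogeneous_X ℚ _ k).sub ?_) _
  refine IsWeightedHomogeneous.sum _ _ _ fun i hi => ?_
  have := ((ih i (Finset.mem_range.mp hi)).pow (p ^ (k - i))).C_mul ((p : ℚ) ^ i)
  rwa [smul_eq_mul, ← pow_add, Nat.sub_add_cancel (Finset.mem_range.mp hi).le] at this

variable [Fact p.Prime] {idx : Type*}

theorem isWeightedHomogeneous_wittStructureRat {Φ : MvPolynomial idx ℚ} (hΦ : Φ.IsHomogeneous 1)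
    (n : ℕ) : (wittStructureRat p Φ n).IsWeightedHomogeneous (p ^ ·.2) (p ^ n) := by
  have hW (k : ℕ) (i : idx) :
      (rename (Prod.mk i) (wittPolynomial p ℚ k)).IsWeightedHomogeneous (p ^ ·.2) (p ^ k * 1) := by
    rw [rename_eq_aeval, mul_one, ← one_mul (p ^ k)]
    exact (isWeightedHomogeneous_wittPolynomial p ℚ k).aeval fun j =>
      by simpa using isWeightedHomogeneous_X ℚ (p ^ ·.2) (i, j)
  rw [wittStructureRat, ← one_mul (p ^ n)]
  exact (isWeightedHomogeneous_xInTermsOfW p n).aeval fun k => by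
    simpa using IsWeightedHomogeneous.aeval hΦ (hW k)

theorem isWeightedHomogeneous_wittStructureInt {Φ : MvPolynomial idx ℤ} (hΦ : Φ.IsHomogeneous 1)
    (n : ℕ) : (wittStructureInt p Φ n).IsWeightedHomogeneous (p ^ ·.2) (p ^ n) := by
  intro d hd
  refine isWeightedHomogeneous_wittStructureRat p (hΦ.map (Int.castRingHom ℚ)) n ?_
  rwa [← map_wittStructureInt, coeff_map, eq_intCast, Int.cast_ne_zero]

theorem WittVector.isWeightedHomogeneous_wittSub (n : ℕ) :
    (wittSub p n).IsWeightedHomogeneous (p ^ ·.2) (p ^ n) :=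
  isWeightedHomogeneous_wittStructureInt p ((isHomogeneous_X ℤ 0).sub (isHomogeneous_X ℤ 1)) n

end WittPolynomials

namespace Valuation

variable {R Γ₀ : Type*} [CommRing R] [LinearOrderedCommMonoidWithZero Γ₀] (v : Valuation R Γ₀)

theorem map_intCast_le_one (z : ℤ) : v z ≤ 1 := by
  induction z using Int.induction_on with
  | zero => simp
  | succ k ih => rw [Int.cast_add, Int.cast_one]; exact v.map_add_le ih v.map_one.le
  | pred k ih => rw [Int.cast_sub, Int.cast_one]; exact v.map_sub_le ih v.map_one.le

theorem pow_map_sum_le {ι : Type*} {s : Finset ι} {f : ι → R} {N : ℕ} (hN : N ≠ 0) {B : Γ₀}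
    (h : ∀ i ∈ s, v (f i) ^ N ≤ B) : v (∑ i ∈ s, f i) ^ N ≤ B := by
  rcases s.eq_empty_or_nonempty with rfl | hs
  · simp [zero_pow hN]
  obtain ⟨i, hi, hmax⟩ := s.exists_max_image (v ∘ f) hs
  exact (pow_le_pow_left' (v.map_sum_le hmax) N).trans (h i hi)

theorem pow_map_aeval_le {σ : Type*} {w : σ → ℕ} {φ : MvPolynomial σ ℤ} {d : ℕ}
    (hφ : φ.IsWeightedHomogeneous w d) {x : σ → R} {N : ℕ} (hN : N ≠ 0) {γ : Γ₀}
    (hx : ∀ s, v (x s) ^ N ≤ γ ^ w s) : v (aeval x φ) ^ N ≤ γ ^ d := by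
  rw [aeval_def, eval₂_eq]
  refine v.pow_map_sum_le hN fun u hu => ?_
  rw [map_mul, mul_pow, map_prod, ← hφ (mem_support_iff.mp hu), Finsupp.weight_apply,
    Finsupp.sum, ← Finset.prod_pow_eq_pow_sum, ← Finset.prod_pow, eq_intCast]
  refine mul_le_of_le_one_of_le (pow_le_one' (v.map_intCast_le_one _) N)
    (Finset.prod_le_prod' fun s _ => ?_)
  rw [map_pow, ← pow_mul, mul_comm, pow_mul, smul_eq_mul, mul_comm, pow_mul]
  exact pow_le_pow_left' (hx s) _

end Valuation

namespace WittVector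

variable {p : ℕ} [Fact p.Prime] {R : Type*} [CommRing R]

theorem pow_map_sub_coeff_le {Γ₀ : Type*} [LinearOrderedCommMonoidWithZero Γ₀]
    (v : Valuation R Γ₀) {x y : WittVector p R} {N : ℕ} (hN : N ≠ 0) {γ : Γ₀}
    (hx : ∀ i, v (x.coeff i) ^ N ≤ γ ^ p ^ i) (hy : ∀ i, v (y.coeff i) ^ N ≤ γ ^ p ^ i)
    (n : ℕ) : v ((x - y).coeff n) ^ N ≤ γ ^ p ^ n := by
  rw [sub_coeff, peval]
  refine v.pow_map_aeval_le (isWeightedHomogeneous_wittSub p n) hN ?_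
  rintro ⟨b, i⟩
  fin_cases b
  exacts [hx i, hy i]

theorem sub_coeff_zero (x y : WittVector p R) : (x - y).coeff 0 = x.coeff 0 - y.coeff 0 :=
  eq_sub_of_add_eq (by rw [← add_coeff_zero, sub_add_cancel])

theorem sub_coeff_of_coeff_eq_zero {x y : WittVector p R} {n : ℕ} (hx : ∀ i < n, x.coeff i = 0)
    (hy : ∀ i < n, y.coeff i = 0) : (x - y).coeff n = x.coeff n - y.coeff n := by
  have hV (z : WittVector p R) : (verschiebung^[n] z).coeff n = z.coeff 0 := by
    simpa using iterate_verschiebung_coeff z n 0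
  rw [eq_iterate_verschiebung hx, eq_iterate_verschiebung hy, ← iterate_map_sub, hV, hV, hV,
    sub_coeff_zero]

end WittVector

namespace TruncatedWittVector

variable {p n : ℕ} {R : Type*} [CommRing R]

theorem coeff_out_of_le (x : TruncatedWittVector p n R) {i : ℕ} (h : n ≤ i) :
    x.out.coeff i = 0 := by
  simp [out, h]

variable [Fact p.Prime]

theorem truncate_out (x : TruncatedWittVector p n R) : WittVector.truncate n x.out = x :=
  x.truncateFun_out

theorem coeff_add_eq_out (x y : TruncatedWittVector p n R) (i : Fin n) :
    (x + y).coeff i = (x.out + y.out).coeff i := by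
  rw [← WittVector.coeff_truncate, map_add, truncate_out, truncate_out]

theorem coeff_sub_eq_out (x y : TruncatedWittVector p n R) (i : Fin n) :
    (x - y).coeff i = (x.out - y.out).coeff i := by
  rw [← WittVector.coeff_truncate, map_sub, truncate_out, truncate_out]

theorem coeff_add_of_disjoint {x y : TruncatedWittVector p n R}
    (h : ∀ i, x.coeff i = 0 ∨ y.coeff i = 0) (i : Fin n) :
    (x + y).coeff i = x.coeff i + y.coeff i := by
  rw [coeff_add_eq_out, WittVector.coeff_add_of_disjoint, coeff_out, coeff_out]
  intro k
  by_cases hk : k < n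
  · simpa only [← coeff_out, Fin.val_mk] using h ⟨k, hk⟩
  · exact Or.inl (coeff_out_of_le x (not_lt.mp hk))

theorem sub_coeff_of_coeff_eq_zero {x y : TruncatedWittVector p n R} {j : Fin n}
    (hx : ∀ i : Fin n, i < j → x.coeff i = 0) (hy : ∀ i : Fin n, i < j → y.coeff i = 0) :
    (x - y).coeff j = x.coeff j - y.coeff j := by
  rw [coeff_sub_eq_out, WittVector.sub_coeff_of_coeff_eq_zero, coeff_out, coeff_out]
  · exact fun i hi => (coeff_out x ⟨i, hi.trans j.2⟩).trans (hx _ hi)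
  · exact fun i hi => (coeff_out y ⟨i, hi.trans j.2⟩).trans (hy _ hi)

def lowerPart (j : ℕ) (x : TruncatedWittVector p n R) : TruncatedWittVector p n R :=
  mk p fun i => if (i : ℕ) < j then x.coeff i else 0

def upperPart (j : ℕ) (x : TruncatedWittVector p n R) : TruncatedWittVector p n R :=
  mk p fun i => if (i : ℕ) < j then 0 else x.coeff i

theorem lowerPart_add_upperPart (j : ℕ) (x : TruncatedWittVector p n R) :
    lowerPart j x + upperPart j x = x := by
  ext i
  rw [coeff_add_of_disjoint]
  · by_cases hi : (i : ℕ) < j <;> simp [lowerPart, upperPart, hi]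
  · intro i
    by_cases hi : (i : ℕ) < j <;> simp [lowerPart, upperPart, hi]

end TruncatedWittVector

theorem pow_pow_sub_le_iff {Γ₀ : Type*} [LinearOrderedCommGroupWithZero Γ₀] {a b : Γ₀}
    {p i k : ℕ} (hp : p ≠ 0) (hik : i ≤ k) : a ^ p ^ (k - i) ≤ b ↔ a ^ p ^ k ≤ b ^ p ^ i := by
  rw [← pow_le_pow_iff_left₀ zero_le zero_le (pow_ne_zero i hp), ← pow_mul, ← pow_add,
    Nat.sub_add_cancel hik]

theorem one_le_exp_natCast (n : ℕ) : 1 ≤ WithZero.exp (n : ℤ) := by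
  simpa using WithZero.exp_le_exp.mpr (Int.natCast_nonneg n)

theorem pow_le_exp_div_iff {p : ℕ} (hp : 0 < p) (γ : ℤᵐ⁰) {q : ℕ} (hq : q ≠ 0) (n : ℕ) :
    γ ^ q ≤ WithZero.exp ((n / p : ℕ) : ℤ) ↔ γ ^ (q * p) ≤ WithZero.exp (n : ℤ) := by
  rcases eq_or_ne γ 0 with rfl | hγ
  · simp [zero_pow hq, zero_pow (Nat.mul_ne_zero hq hp.ne')]
  obtain ⟨g, rfl⟩ := WithZero.ne_zero_iff_exists.mp hγ
  rw [WithZero.exp, WithZero.exp, ← WithZero.coe_pow, ← WithZero.coe_pow, WithZero.coe_le_coe,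
    WithZero.coe_le_coe]
  simp only [← Multiplicative.toAdd_le, Int.toAdd_pow, toAdd_ofAdd]
  rw [Int.natCast_div, Int.le_ediv_iff_mul_le (by exact_mod_cast hp), Nat.cast_mul, ← mul_assoc]

theorem Valuation.pow_map_pow_le_of_map_sub_pow_le {R Γ₀ : Type*} [CommRing R]
    [LinearOrderedCommGroupWithZero Γ₀] (v : Valuation R Γ₀) {p N : ℕ} (hp : 1 < p) {x : R}
    {B : Γ₀} (hB : 1 ≤ B) (h : v (x - x ^ p) ^ N ≤ B) : v (x ^ p) ^ N ≤ B := by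
  rcases le_or_gt (v x) 1 with hx | hx
  · exact (pow_le_one' (by simpa using pow_le_one' hx p) N).trans hB
  rwa [← v.map_sub_eq_of_lt_right (by simpa using lt_self_pow₀ hx hp)]

def frobeniusBar {p m : ℕ} {K : Type*} [CommRing K] (a : TruncatedWittVector p m K) :
    TruncatedWittVector p m K :=
  TruncatedWittVector.mk p fun j => a.coeff j ^ p

section Filtration

open TruncatedWittVector

variable {p m : ℕ} [hp : Fact p.Prime] {K : Type*} [CommRing K]
  (v : Valuation K ℤᵐ⁰) {n : ℕ}

theorem mem_wittFil_iff_out {x : TruncatedWittVector p m K} :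
    x ∈ wittFil p m K v n ↔ ∀ i, v (x.out.coeff i) ^ p ^ (m - 1) ≤ WithZero.exp (n : ℤ) ^ p ^ i := by
  refine ⟨fun hx i => ?_, fun hx j => ?_⟩
  · rcases lt_or_ge i m with hi | hi
    · rw [← Fin.val_mk hi, coeff_out,
        ← pow_pow_sub_le_iff hp.out.ne_zero (by omega)]
      exact hx ⟨i, hi⟩
    · simp [x.coeff_out_of_le hi, hp.out.ne_zero]
  · rw [pow_pow_sub_le_iff hp.out.ne_zero (by omega), ← coeff_out]
    exact hx j

theorem sub_mem_wittFil {x y : TruncatedWittVector p m K} (hx : x ∈ wittFil p m K v n)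
    (hy : y ∈ wittFil p m K v n) : x - y ∈ wittFil p m K v n := by
  intro j
  rw [coeff_sub_eq_out, pow_pow_sub_le_iff hp.out.ne_zero (by omega)]
  exact WittVector.pow_map_sub_coeff_le v (pow_ne_zero _ hp.out.ne_zero)
    ((mem_wittFil_iff_out v).mp hx) ((mem_wittFil_iff_out v).mp hy) j

theorem wittFil_mono {n n' : ℕ} (h : n ≤ n') : wittFil p m K v n ⊆ wittFil p m K v n' :=
  fun _ hx j => (hx j).trans (by simpa using h)

theorem frobeniusBar_mem_wittFil_iff {a : TruncatedWittVector p m K} :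
    frobeniusBar a ∈ wittFil p m K v n ↔ a ∈ wittFil p m K v (n / p) := by
  simp only [wittFil, frobeniusBar, Set.mem_ofPred_eq, TruncatedWittVector.coeff_mk, map_pow,
    ← pow_mul, mul_comm p, ← WithZero.exp_eq_coe_ofAdd,
    pow_le_exp_div_iff hp.out.pos _ (pow_ne_zero _ hp.out.ne_zero)]

theorem sub_frobeniusBar_mem_wittFil {a : TruncatedWittVector p m K}
    (ha : a ∈ wittFil p m K v (n / p)) : a - frobeniusBar a ∈ wittFil p m K v n :=
  sub_mem_wittFil v (wittFil_mono v (Nat.div_le_self n p) ha)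
    ((frobeniusBar_mem_wittFil_iff v).mpr ha)

theorem frobeniusBar_lowerPart (j : ℕ) (a : TruncatedWittVector p m K) :
    frobeniusBar (lowerPart j a) = lowerPart j (frobeniusBar a) := by
  ext i
  by_cases hi : (i : ℕ) < j <;> simp [frobeniusBar, lowerPart, hi, hp.out.ne_zero]

theorem frobeniusBar_upperPart (j : ℕ) (a : TruncatedWittVector p m K) :
    frobeniusBar (upperPart j a) = upperPart j (frobeniusBar a) := by
  ext i
  by_cases hi : (i : ℕ) < j <;> simp [frobeniusBar, upperPart, hi, hp.out.ne_zero]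

theorem coeff_sub_frobeniusBar_sub_lowerPart (a : TruncatedWittVector p m K) (i : Fin m) :
    (a - frobeniusBar a - (lowerPart i a - frobeniusBar (lowerPart i a))).coeff i =
      a.coeff i - a.coeff i ^ p := by
  have hF : frobeniusBar (lowerPart i a) + frobeniusBar (upperPart i a) = frobeniusBar a := by
    rw [frobeniusBar_lowerPart, frobeniusBar_upperPart, lowerPart_add_upperPart]
  have hsplit : a - frobeniusBar a - (lowerPart i a - frobeniusBar (lowerPart i a)) =
      upperPart i a - frobeniusBar (upperPart i a) := by
    rw [← hF]
    nth_rewrite 1 [← lowerPart_add_upperPart i a]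
    abel
  rw [hsplit, sub_coeff_of_coeff_eq_zero]
  · simp [frobeniusBar, upperPart]
  all_goals
    intro k hk
    simp [frobeniusBar, upperPart, hk, hp.out.ne_zero]

theorem mem_wittFil_div_of_sub_frobeniusBar_mem {a : TruncatedWittVector p m K}
    (h : a - frobeniusBar a ∈ wittFil p m K v n) : a ∈ wittFil p m K v (n / p) := by
  rw [← frobeniusBar_mem_wittFil_iff]
  suffices ∀ j, lowerPart j (frobeniusBar a) ∈ wittFil p m K v n by
    simpa [lowerPart] using this m
  intro j
  induction j with
  | zero => intro i; simp [lowerPart, hp.out.ne_zero]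
  | succ j ih =>
    intro i
    rcases lt_trichotomy (i : ℕ) j with hij | rfl | hij
    · simpa [lowerPart, hij, hij.le] using ih i
    · have hlo : lowerPart i a ∈ wittFil p m K v (n / p) := by
        rw [← frobeniusBar_mem_wittFil_iff, frobeniusBar_lowerPart]
        exact ih
      have hsub := sub_mem_wittFil v h (sub_frobeniusBar_mem_wittFil v hlo) i
      rw [coeff_sub_frobeniusBar_sub_lowerPart] at hsub
      simpa [lowerPart, frobeniusBar, WithZero.exp_eq_coe_ofAdd] using
        v.pow_map_pow_le_of_map_sub_pow_le hp.out.one_lt (one_le_exp_natCast n) hsub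
    · simp [lowerPart, Nat.not_le.mpr hij, hp.out.ne_zero]

end Filtration

theorem statement_3_general (p m : ℕ) [hp : Fact p.Prime] (K : Type*) [Field K]
    (v : Valuation K (WithZero (Multiplicative ℤ)))
    (n : ℕ) (a : TruncatedWittVector p m K) :
    (a - TruncatedWittVector.mk p (fun j => (a.coeff j) ^ p)) ∈ wittFil p m K v n ↔
      a ∈ wittFil p m K v (n / p) :=
  ⟨mem_wittFil_div_of_sub_frobeniusBar_mem v, sub_frobeniusBar_mem_wittFil v⟩

/-- Let `K` be a discrete valuation field of characteristic `p > 0` with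
normalized valuation `v_K`, and `F̄` the componentwise `p`-th power Frobenius on
`W_m(K)`.  Then for `a ∈ W_m(K)` and `n ≥ 0` one has `(1 - F̄)(a) ∈ fil_n W_m(K)` if and
only if `a ∈ fil_{⌊n/p⌋} W_m(K)`. -/
theorem statement_3 (p m : ℕ) [hp : Fact p.Prime] (K : Type*) [Field K] [CharP K p]
    (v : Valuation K (WithZero (Multiplicative ℤ)))
    -- the valuation is normalized (in particular, discrete):
    (hv : ∀ d : ℤ, ∃ x : K, v x = ((ofAdd d : Multiplicative ℤ) : WithZero (Multiplicative ℤ)))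
    (n : ℕ) (a : TruncatedWittVector p m K) :
    (a - TruncatedWittVector.mk p (fun j => (a.coeff j) ^ p)) ∈ wittFil p m K v n ↔
      a ∈ wittFil p m K v (n / p) :=
  statement_3_general p m (hp := hp) K v n a
end

section
/- Let K be a discrete valuation field of characteristic p with valuation v_K and let fil_n W_m(K) = { (a_{m-1},…,a_0) : p^i v_K(a_i) ≥ −n }. Then the sequence 0 → fil_n W_1(K) → fil_n W_m(K) → fil_{⌊n/p⌋} W_{m-1}(K) → 0 is exact, where the first map is the (m−1)-fold Verschiebung V^{m-1} and the second is the restriction R. -/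
/-! All three maps act coefficientwise: truncation shifts the exponent `p^(m-1-j)` down by one
factor of `p`, and `t^p ≤ ofAdd n ↔ t ≤ ofAdd ⌊n/p⌋` in `ℤₘ₀`. -/

open Multiplicative

lemma WithZero.pow_le_ofAdd_iff_le_ofAdd_div {p : ℕ} (hp : 0 < p) (n : ℕ)
    (t : WithZero (Multiplicative ℤ)) :
    t ^ p ≤ ((ofAdd (n : ℤ) : Multiplicative ℤ) : WithZero (Multiplicative ℤ)) ↔
      t ≤ ((ofAdd ((n / p : ℕ) : ℤ) : Multiplicative ℤ) : WithZero (Multiplicative ℤ)) := by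
  rcases eq_or_ne t 0 with rfl | ht
  · simp [zero_pow hp.ne']
  obtain ⟨g, rfl⟩ := WithZero.ne_zero_iff_exists.mp ht
  rw [← ofAdd_toAdd g, ← WithZero.coe_pow, WithZero.coe_le_coe, WithZero.coe_le_coe,
    ← ofAdd_nsmul, ofAdd_le, ofAdd_le, nsmul_eq_mul, mul_comm, Int.natCast_ediv]
  exact (Int.le_ediv_iff_mul_le (by exact_mod_cast hp)).symm

lemma WithZero.pow_pow_succ_le_ofAdd_iff {p : ℕ} (hp : 0 < p) (k n : ℕ)
    (t : WithZero (Multiplicative ℤ)) :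
    t ^ p ^ (k + 1) ≤ ((ofAdd (n : ℤ) : Multiplicative ℤ) : WithZero (Multiplicative ℤ)) ↔
      t ^ p ^ k ≤ ((ofAdd ((n / p : ℕ) : ℤ) : Multiplicative ℤ) :
        WithZero (Multiplicative ℤ)) := by
  rw [pow_succ, pow_mul]
  exact WithZero.pow_le_ofAdd_iff_le_ofAdd_div hp n _

namespace TruncatedWittVector

variable {p m : ℕ} {K : Type*} [CommRing K]

/-- The `(m-1)`-fold Verschiebung `W_1(K) = K → W_m(K)`, `a ↦ (0, …, 0, a)`. -/
def topVerschiebung (p m : ℕ) (a : K) : TruncatedWittVector p m K :=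
  mk p (fun j => if (j : ℕ) = m - 1 then a else 0)

lemma topVerschiebung_injective (hm : 1 ≤ m) :
    Function.Injective (topVerschiebung (K := K) p m) := by
  intro a b hab
  simpa [topVerschiebung, coeff_mk] using congrArg (coeff ⟨m - 1, by omega⟩) hab

def extendByZero (y : TruncatedWittVector p (m - 1) K) : TruncatedWittVector p m K :=
  mk p (fun j => if h : (j : ℕ) < m - 1 then y.coeff ⟨j, h⟩ else 0)

variable [Fact p.Prime]

lemma truncate_extendByZero (y : TruncatedWittVector p (m - 1) K) :
    truncate (Nat.sub_le m 1) (extendByZero y) = y := by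
  ext j
  simp [extendByZero, coeff_truncate, coeff_mk]

lemma truncate_topVerschiebung (a : K) :
    truncate (Nat.sub_le m 1) (topVerschiebung p m a) = 0 := by
  ext j
  have hj : (j : ℕ) ≠ m - 1 := j.2.ne
  simp [topVerschiebung, coeff_truncate, coeff_mk, hj]

lemma topVerschiebung_coeff_last_of_truncate_eq_zero (hm : 1 ≤ m)
    {x : TruncatedWittVector p m K} (hx : truncate (Nat.sub_le m 1) x = 0) :
    topVerschiebung p m (x.coeff ⟨m - 1, by omega⟩) = x := by
  ext j
  simp only [topVerschiebung, coeff_mk]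
  split_ifs with hj
  · exact congrArg x.coeff (Fin.ext hj.symm)
  · have hj' : (j : ℕ) < m - 1 := by omega
    simpa [coeff_truncate] using (congrArg (coeff ⟨j, hj'⟩) hx).symm

end TruncatedWittVector

namespace wittFil

open TruncatedWittVector

variable {p m : ℕ} [Fact p.Prime] {K : Type*} [CommRing K]
  {v : Valuation K (WithZero (Multiplicative ℤ))} {n : ℕ}

lemma topVerschiebung_mem
    {a : K} (ha : v a ≤ ((ofAdd (n : ℤ) : Multiplicative ℤ) : WithZero (Multiplicative ℤ))) :
    topVerschiebung p m a ∈ wittFil p m K v n := by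
  intro j
  simp only [topVerschiebung, coeff_mk]
  split_ifs with hj
  · simpa [hj] using ha
  · simp [zero_pow (pow_ne_zero _ (Fact.out : p.Prime).ne_zero)]

lemma valuation_coeff_last_le (hm : 1 ≤ m) {x : TruncatedWittVector p m K}
    (hx : x ∈ wittFil p m K v n) :
    v (x.coeff ⟨m - 1, by omega⟩) ≤
      ((ofAdd (n : ℤ) : Multiplicative ℤ) : WithZero (Multiplicative ℤ)) := by
  simpa using hx ⟨m - 1, by omega⟩

lemma truncate_mem {x : TruncatedWittVector p m K} (hx : x ∈ wittFil p m K v n) :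
    truncate (Nat.sub_le m 1) x ∈ wittFil p (m - 1) K v (n / p) := by
  intro j
  have hxj := hx (Fin.castLE (Nat.sub_le m 1) j)
  rw [Fin.val_castLE, show m - 1 - (j : ℕ) = m - 1 - 1 - j + 1 by omega,
    WithZero.pow_pow_succ_le_ofAdd_iff (Fact.out : p.Prime).pos] at hxj
  simpa [coeff_truncate] using hxj

lemma extendByZero_mem {y : TruncatedWittVector p (m - 1) K}
    (hy : y ∈ wittFil p (m - 1) K v (n / p)) : extendByZero y ∈ wittFil p m K v n := by
  intro j
  simp only [extendByZero, coeff_mk]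
  split_ifs with hj
  · rw [show m - 1 - (j : ℕ) = m - 1 - 1 - j + 1 by omega,
      WithZero.pow_pow_succ_le_ofAdd_iff (Fact.out : p.Prime).pos]
    exact hy ⟨j, hj⟩
  · simp [zero_pow (pow_ne_zero _ (Fact.out : p.Prime).ne_zero)]

end wittFil

open TruncatedWittVector in
theorem statement_4_general (p m : ℕ) [hp : Fact p.Prime] (hm : 1 ≤ m)
    (K : Type*) [Field K]
    (v : Valuation K (WithZero (Multiplicative ℤ)))
    (n : ℕ) :
    -- the Verschiebung `V^{m-1} : W_1(K) = K → W_m(K)`, `a ↦ (0, …, 0, a)`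
    letI Vm : K → TruncatedWittVector p m K :=
      fun a => TruncatedWittVector.mk p (fun j => if (j : ℕ) = m - 1 then a else 0)
    -- the restriction `R : W_m(K) → W_{m-1}(K)`
    letI Rm : TruncatedWittVector p m K → TruncatedWittVector p (m - 1) K :=
      TruncatedWittVector.truncate (Nat.sub_le m 1)
    (∀ a : K, v a ≤ ((ofAdd (n : ℤ) : Multiplicative ℤ) : WithZero (Multiplicative ℤ)) →
        Vm a ∈ wittFil p m K v n) ∧
    Function.Injective Vm ∧
    (∀ x ∈ wittFil p m K v n, Rm x ∈ wittFil p (m - 1) K v (n / p)) ∧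
    (∀ y ∈ wittFil p (m - 1) K v (n / p), ∃ x ∈ wittFil p m K v n, Rm x = y) ∧
    (∀ x ∈ wittFil p m K v n, (Rm x = 0 ↔
        ∃ a : K, v a ≤ ((ofAdd (n : ℤ) : Multiplicative ℤ) : WithZero (Multiplicative ℤ)) ∧
          Vm a = x)) := by
  refine ⟨fun a ha => wittFil.topVerschiebung_mem ha, topVerschiebung_injective hm,
    fun x hx => wittFil.truncate_mem hx,
    fun y hy => ⟨extendByZero y, wittFil.extendByZero_mem hy, truncate_extendByZero y⟩,
    fun x hx => ⟨fun hR => ?_, ?_⟩⟩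
  · exact ⟨_, wittFil.valuation_coeff_last_le hm hx,
      topVerschiebung_coeff_last_of_truncate_eq_zero hm hR⟩
  · rintro ⟨a, -, rfl⟩
    exact truncate_topVerschiebung a

/-- Let `K` be a discrete valuation field of characteristic `p`.  Then the
sequence `0 → fil_n W_1(K) → fil_n W_m(K) → fil_{⌊n/p⌋} W_{m-1}(K) → 0` is exact, where the
first map is the `(m-1)`-fold Verschiebung `V^{m-1} : a ↦ (0, …, 0, a)` and the second is
the restriction `R` (dropping the last coordinate):
(1) `V^{m-1}` maps `fil_n W_1(K) = {a : v_K(a) ≥ -n}` into `fil_n W_m(K)` and is injective;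
(2) `R` maps `fil_n W_m(K)` into `fil_{⌊n/p⌋} W_{m-1}(K)` and onto it;
(3) an element of `fil_n W_m(K)` is killed by `R` iff it is `V^{m-1}(a)` for some `a` with
    `v_K(a) ≥ -n`. -/
theorem statement_4 (p m : ℕ) [hp : Fact p.Prime] (hm : 1 ≤ m)
    (K : Type*) [Field K] [CharP K p]
    (v : Valuation K (WithZero (Multiplicative ℤ)))
    (hv : ∀ d : ℤ, ∃ x : K, v x = ((ofAdd d : Multiplicative ℤ) : WithZero (Multiplicative ℤ)))
    (n : ℕ) :
    -- the Verschiebung `V^{m-1} : W_1(K) = K → W_m(K)`, `a ↦ (0, …, 0, a)`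
    letI Vm : K → TruncatedWittVector p m K :=
      fun a => TruncatedWittVector.mk p (fun j => if (j : ℕ) = m - 1 then a else 0)
    -- the restriction `R : W_m(K) → W_{m-1}(K)`
    letI Rm : TruncatedWittVector p m K → TruncatedWittVector p (m - 1) K :=
      TruncatedWittVector.truncate (Nat.sub_le m 1)
    (∀ a : K, v a ≤ ((ofAdd (n : ℤ) : Multiplicative ℤ) : WithZero (Multiplicative ℤ)) →
        Vm a ∈ wittFil p m K v n) ∧
    Function.Injective Vm ∧
    (∀ x ∈ wittFil p m K v n, Rm x ∈ wittFil p (m - 1) K v (n / p)) ∧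
    (∀ y ∈ wittFil p (m - 1) K v (n / p), ∃ x ∈ wittFil p m K v n, Rm x = y) ∧
    (∀ x ∈ wittFil p m K v n, (Rm x = 0 ↔
        ∃ a : K, v a ≤ ((ofAdd (n : ℤ) : Multiplicative ℤ) : WithZero (Multiplicative ℤ)) ∧
          Vm a = x)) :=
  statement_4_general p m (hp := hp) hm K v n
end
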